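/- Let H and D be complex Hilbert spaces, U a unitary operator on H, B : D → H a linear isometry, Γ a strict contraction on D, and T := U + B(Γ − I)B*U (a contraction). Then for every z in the open unit disc 𝔻, B*(−T + zD_{T*}(I − zT*)⁻¹D_T)U*B = −Γ + D_{Γ*}F₁(z)[I − (Γ* − I)F₁(z)]⁻¹D_Γ, where F₁(z) := zB*(I − zU*)⁻¹U*B (and the inverted operators are indeed invertible for z ∈ 𝔻). -/

import Mathlib

/-! Write `T = P U` with `P = 1 + B (Γ - 1) B*`. Since `B` is an isometry, `A ↦ 1 + B (A - 1) B*`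
is multiplicative and commutes with adjoints, so `1 - T T* = B (1 - Γ Γ*) B*` and
`1 - T* T = (U* B) (1 - Γ* Γ) (U* B)*`; square roots commute with conjugation by an isometry, which
gives `D_{T*}` and `D_T` in terms of `D_{Γ*}` and `D_Γ`. For the resolvent, `1 - z T*` is the
perturbation `1 - z U* - z U* B K B*` of `1 - z U*`, with `K = Γ* - 1`, and a Woodbury-type
computation gives `z B* (1 - z T*)⁻¹ U* B = F₁ (1 - K F₁)⁻¹`; invertibility of `1 - K F₁` comes
from that of `1 - z T*` through `IsUnit (1 - X Y) → IsUnit (1 - Y X)`. -/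

open ContinuousLinearMap

theorem isUnit_one_sub_smul_of_norm_le_one {𝕜 R : Type*} [NormedField 𝕜] [NormedRing R]
    [NormedAlgebra 𝕜 R] [HasSummableGeomSeries R] {a : R} (ha : ‖a‖ ≤ 1) {z : 𝕜} (hz : ‖z‖ < 1) :
    IsUnit (1 - z • a) := by
  refine isUnit_one_sub_of_norm_lt_one ?_
  calc ‖z • a‖ = ‖z‖ * ‖a‖ := norm_smul z a
    _ ≤ ‖z‖ * 1 := by gcongr
    _ < 1 := by simpa using hz

theorem ContinuousLinearMap.norm_le_one_of_norm_apply_lt {𝕜 E : Type*} [NontriviallyNormedField 𝕜]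
    [NormedAddCommGroup E] [NormedSpace 𝕜 E] {f : E →L[𝕜] E}
    (hf : ∀ x : E, x ≠ 0 → ‖f x‖ < ‖x‖) : ‖f‖ ≤ 1 := by
  refine f.opNorm_le_bound zero_le_one fun x => ?_
  rcases eq_or_ne x 0 with rfl | hx
  · simp
  · simpa using (hf x hx).le

section CStarAlgebra

variable {A : Type*} [CStarAlgebra A] [PartialOrder A] [StarOrderedRing A]

theorem one_sub_star_mul_self_nonneg_iff {a : A} : 0 ≤ 1 - star a * a ↔ ‖a‖ ≤ 1 := by
  rw [sub_nonneg, ← CStarAlgebra.norm_le_one_iff_of_nonneg (star a * a),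
    CStarRing.norm_star_mul_self, ← sq, sq_le_one_iff₀ (norm_nonneg a)]

theorem one_sub_mul_star_self_nonneg_iff {a : A} : 0 ≤ 1 - a * star a ↔ ‖a‖ ≤ 1 := by
  simpa using one_sub_star_mul_self_nonneg_iff (a := star a)

theorem norm_le_one_of_mem_unitary {u : A} (hu : u ∈ unitary A) : ‖u‖ ≤ 1 :=
  one_sub_star_mul_self_nonneg_iff.mp <| by rw [Unitary.star_mul_self_of_mem hu, sub_self]

end CStarAlgebra

namespace ContinuousLinearMap

section Algebraic

variable {R E F G : Type*} [CommRing R]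
  [TopologicalSpace E] [AddCommGroup E] [Module R E]
  [TopologicalSpace F] [AddCommGroup F] [Module R F]
  [TopologicalSpace G] [AddCommGroup G] [Module R G]

theorem comp_comp_of_comp_eq_one {f : F →L[R] E} {g : E →L[R] F} (h : f ∘L g = 1)
    (t : G →L[R] E) : f ∘L (g ∘L t) = t := by
  rw [← comp_assoc, h, one_def, id_comp]

variable [IsTopologicalAddGroup E]

theorem inverse_comp_eq_iff {A : E →L[R] E} (hA : IsUnit A) {X Y : F →L[R] E} :
    Ring.inverse A ∘L X = Y ↔ X = A ∘L Y := by
  obtain ⟨u, rfl⟩ := hA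
  rw [Ring.inverse_unit]
  constructor
  · rintro rfl
    exact (comp_comp_of_comp_eq_one u.mul_inv X).symm
  · rintro rfl
    exact comp_comp_of_comp_eq_one u.inv_mul Y

variable [IsTopologicalAddGroup F]

theorem isUnit_one_sub_comp_comm {X : F →L[R] E} {Y : E →L[R] F} (h : IsUnit (1 - X ∘L Y)) :
    IsUnit (1 - Y ∘L X) := by
  obtain ⟨u, hu⟩ := h
  set c : E →L[R] E := ↑u⁻¹
  have hright : c - X ∘L Y ∘L c = 1 := by
    have := u.mul_inv
    rwa [hu, sub_mul, one_mul, mul_def, comp_assoc] at this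
  have hleft : c - c ∘L X ∘L Y = 1 := by
    have := u.inv_mul
    rwa [hu, mul_sub, mul_one, mul_def] at this
  refine ⟨⟨1 - Y ∘L X, 1 + Y ∘L c ∘L X, ?_, ?_⟩, rfl⟩
  · calc (1 - Y ∘L X) * (1 + Y ∘L c ∘L X) = 1 + Y ∘L (c - X ∘L Y ∘L c - 1) ∘L X := by
          simp only [mul_def, comp_sub, sub_comp, comp_add, one_def, id_comp, comp_id, comp_assoc]
          abel
      _ = 1 := by rw [hright, sub_self, zero_comp, comp_zero, add_zero]
  · calc (1 + Y ∘L c ∘L X) * (1 - Y ∘L X) = 1 + Y ∘L (c - c ∘L X ∘L Y - 1) ∘L X := by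
          simp only [mul_def, comp_sub, sub_comp, add_comp, one_def, id_comp, comp_id, comp_assoc]
          abel
      _ = 1 := by rw [hleft, sub_self, zero_comp, comp_zero, add_zero]

variable [ContinuousConstSMul R E] [ContinuousConstSMul R F]

theorem compressed_resolvent_of_perturbation (A : E →L[R] E) (B : F →L[R] E) (C : E →L[R] F)
    (K : F →L[R] F) (z : R) (hA : IsUnit (1 - z • A))
    (hS : IsUnit (1 - z • (A ∘L (1 + B ∘L K ∘L C)))) (F₁ : F →L[R] F)
    (hF₁ : F₁ = z • (C ∘L Ring.inverse (1 - z • A) ∘L A ∘L B)) :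
    IsUnit (1 - K ∘L F₁) ∧
      z • (C ∘L Ring.inverse (1 - z • (A ∘L (1 + B ∘L K ∘L C))) ∘L A ∘L B) =
        F₁ ∘L Ring.inverse (1 - K ∘L F₁) := by
  set W := 1 - z • A
  set S := 1 - z • (A ∘L (1 + B ∘L K ∘L C))
  set X := z • (Ring.inverse W ∘L A ∘L B)
  have hF₁X : F₁ = C ∘L X := by rw [hF₁, comp_smul]
  have hWX : W ∘L X = z • (A ∘L B) := by
    rw [comp_smul, ← comp_assoc, ← mul_def, Ring.mul_inverse_cancel _ hA, one_def, id_comp]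
  have hSW : S = W - W ∘L X ∘L K ∘L C := by
    rw [← comp_assoc, hWX]
    simp only [S, W, comp_add, one_def, comp_id, smul_add, smul_comp, comp_assoc]
    abel
  have hfactor : Ring.inverse W * S = 1 - X ∘L K ∘L C := by
    rw [hSW, mul_sub, Ring.inverse_mul_cancel _ hA, mul_def,
      comp_comp_of_comp_eq_one (Ring.inverse_mul_cancel _ hA)]
  have hSX : S ∘L X = (z • (A ∘L B)) ∘L (1 - K ∘L F₁) := by
    rw [hSW, sub_comp, hWX, ← comp_assoc, hWX, hF₁X]
    simp only [comp_sub, one_def, comp_id, smul_comp, comp_assoc]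
  have hunit : IsUnit (1 - K ∘L F₁) := by
    have := isUnit_one_sub_comp_comm (hfactor ▸ hA.ringInverse.mul hS)
    rwa [comp_assoc, ← hF₁X] at this
  refine ⟨hunit, ?_⟩
  have hAB : z • (A ∘L B) = S ∘L X ∘L Ring.inverse (1 - K ∘L F₁) := by
    have hN : (1 - K ∘L F₁) ∘L Ring.inverse (1 - K ∘L F₁) = 1 := Ring.mul_inverse_cancel _ hunit
    rw [← comp_assoc, hSX, comp_assoc (z • (A ∘L B)), hN, one_def, comp_id]
  calc z • (C ∘L Ring.inverse S ∘L A ∘L B) = C ∘L Ring.inverse S ∘L (z • (A ∘L B)) := by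
        simp only [comp_smul]
    _ = F₁ ∘L Ring.inverse (1 - K ∘L F₁) := by
        rw [(inverse_comp_eq_iff hS).mpr hAB, ← comp_assoc, ← hF₁X]

end Algebraic

section Hilbert

variable {H D : Type*} [NormedAddCommGroup H] [InnerProductSpace ℂ H] [CompleteSpace H]
  [NormedAddCommGroup D] [InnerProductSpace ℂ D] [CompleteSpace D]

theorem sqrt_conj_adjoint_of_isometry {C : D →L[ℂ] H} (hC : adjoint C ∘L C = 1) {M : D →L[ℂ] D}
    (hM : 0 ≤ M) : CFC.sqrt (C ∘L M ∘L adjoint C) = C ∘L CFC.sqrt M ∘L adjoint C := by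
  refine CFC.sqrt_unique ?_ ?_
  · conv_rhs => rw [← CFC.sqrt_mul_sqrt_self M hM]
    simp only [mul_def, comp_assoc, comp_comp_of_comp_eq_one hC]
  · rw [nonneg_iff_isPositive] at hM ⊢
    exact ((nonneg_iff_isPositive _).mp (CFC.sqrt_nonneg M)).conj_adjoint C

/-- For an isometry `B`, this acts as `A` on the range of `B` and as the identity on its
orthogonal complement. -/
noncomputable def extendById (B : D →L[ℂ] H) (A : D →L[ℂ] D) : H →L[ℂ] H :=
  1 + B ∘L (A - 1) ∘L adjoint B

variable {B : D →L[ℂ] H} {A A' : D →L[ℂ] D} {U : H →L[ℂ] H}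

theorem extendById_comp (U : H →L[ℂ] H) :
    extendById B A ∘L U = U + B ∘L (A - 1) ∘L adjoint B ∘L U := by
  simp only [extendById, add_comp, one_def, id_comp, comp_assoc]

theorem adjoint_extendById : adjoint (extendById B A) = extendById B (adjoint A) := by
  simp only [extendById, map_add, map_sub, adjoint_comp, adjoint_adjoint, adjoint_one, comp_assoc]

theorem one_sub_extendById : 1 - extendById B A = B ∘L (1 - A) ∘L adjoint B := by
  simp only [extendById, comp_sub, sub_comp]
  abel

theorem extendById_comp_extendById (hB : adjoint B ∘L B = 1) :
    extendById B A ∘L extendById B A' = extendById B (A ∘L A') := by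
  have key : (A - 1) + (A' - 1) + (A - 1) * (A' - 1) = A * A' - 1 := by noncomm_ring
  calc extendById B A ∘L extendById B A'
      = 1 + B ∘L ((A - 1) + (A' - 1) + (A - 1) * (A' - 1)) ∘L adjoint B := by
        simp only [extendById, comp_add, add_comp, one_def, comp_id, id_comp,
          comp_assoc, comp_comp_of_comp_eq_one hB, mul_def]
        abel
    _ = extendById B (A ∘L A') := by rw [key]; rfl

theorem adjoint_comp_extendById_comp (hB : adjoint B ∘L B = 1) :
    adjoint B ∘L extendById B A ∘L B = A := by
  simp only [extendById, comp_add, add_comp, comp_assoc, comp_comp_of_comp_eq_one hB, hB,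
    one_def, id_comp, comp_id]
  abel

theorem one_sub_star_mul_self_extendById_comp (hB : adjoint B ∘L B = 1)
    (hU : U ∈ unitary (H →L[ℂ] H)) :
    1 - star (extendById B A ∘L U) * (extendById B A ∘L U) =
      (adjoint U ∘L B) ∘L (1 - star A * A) ∘L adjoint (adjoint U ∘L B) := by
  have hUU : adjoint U ∘L U = 1 := Unitary.star_mul_self_of_mem hU
  calc 1 - star (extendById B A ∘L U) * (extendById B A ∘L U)
      = adjoint U ∘L (1 - extendById B (adjoint A ∘L A)) ∘L U := by
        rw [star_eq_adjoint, mul_def, adjoint_comp, adjoint_extendById, comp_assoc,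
          ← comp_assoc (extendById B (adjoint A)) (extendById B A) U,
          extendById_comp_extendById hB]
        simp only [comp_sub, sub_comp, one_def, id_comp, ← comp_assoc, hUU]
    _ = (adjoint U ∘L B) ∘L (1 - star A * A) ∘L adjoint (adjoint U ∘L B) := by
        rw [one_sub_extendById, adjoint_comp, adjoint_adjoint]
        simp only [comp_assoc]
        rfl

theorem one_sub_mul_star_self_extendById_comp (hB : adjoint B ∘L B = 1)
    (hU : U ∈ unitary (H →L[ℂ] H)) :
    1 - (extendById B A ∘L U) * star (extendById B A ∘L U) =
      B ∘L (1 - A * star A) ∘L adjoint B := by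
  have hUU : U ∘L adjoint U = 1 := Unitary.mul_star_self_of_mem hU
  rw [star_eq_adjoint, mul_def, adjoint_comp, adjoint_extendById, comp_assoc,
    comp_comp_of_comp_eq_one hUU, extendById_comp_extendById hB, one_sub_extendById]
  rfl

theorem norm_extendById_comp_le_one (hB : adjoint B ∘L B = 1) (hU : U ∈ unitary (H →L[ℂ] H))
    (hA : ‖A‖ ≤ 1) : ‖extendById B A ∘L U‖ ≤ 1 := by
  rw [← one_sub_star_mul_self_nonneg_iff, one_sub_star_mul_self_extendById_comp hB hU,
    nonneg_iff_isPositive]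
  exact ((nonneg_iff_isPositive _).mp (one_sub_star_mul_self_nonneg_iff.mpr hA)).conj_adjoint _

theorem sqrt_one_sub_star_mul_self_extendById_comp (hB : adjoint B ∘L B = 1)
    (hU : U ∈ unitary (H →L[ℂ] H)) (hA : ‖A‖ ≤ 1) :
    CFC.sqrt (1 - star (extendById B A ∘L U) * (extendById B A ∘L U)) =
      (adjoint U ∘L B) ∘L CFC.sqrt (1 - star A * A) ∘L adjoint (adjoint U ∘L B) := by
  have hUU : U ∘L adjoint U = 1 := Unitary.mul_star_self_of_mem hU
  have hUB : adjoint (adjoint U ∘L B) ∘L (adjoint U ∘L B) = 1 := by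
    rw [adjoint_comp, adjoint_adjoint, comp_assoc, comp_comp_of_comp_eq_one hUU, hB]
  rw [one_sub_star_mul_self_extendById_comp hB hU,
    sqrt_conj_adjoint_of_isometry hUB (one_sub_star_mul_self_nonneg_iff.mpr hA)]

theorem sqrt_one_sub_mul_star_self_extendById_comp (hB : adjoint B ∘L B = 1)
    (hU : U ∈ unitary (H →L[ℂ] H)) (hA : ‖A‖ ≤ 1) :
    CFC.sqrt (1 - (extendById B A ∘L U) * star (extendById B A ∘L U)) =
      B ∘L CFC.sqrt (1 - A * star A) ∘L adjoint B := by
  rw [one_sub_mul_star_self_extendById_comp hB hU,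
    sqrt_conj_adjoint_of_isometry hB (one_sub_mul_star_self_nonneg_iff.mpr hA)]

end Hilbert

end ContinuousLinearMap

/-- Equation (4.2)/(A.1): the characteristic function of the contraction
`T = U + B (Γ - I) B* U` (with `U` unitary, `B` an isometry, `Γ` a strict contraction)
is given (in the coordinates `V = B* U`, `V* = B*`) by
`B* (-T + z D_{T*} (I - z T*)⁻¹ D_T) U* B = -Γ + D_{Γ*} F₁(z) [I - (Γ* - I) F₁(z)]⁻¹ D_Γ`,
where `F₁(z) = z B* (I - z U*)⁻¹ U* B` and `D_A = (I - A*A)^{1/2}`. -/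
theorem characteristic_function_formula
    {H D : Type*} [NormedAddCommGroup H] [InnerProductSpace ℂ H] [CompleteSpace H]
    [NormedAddCommGroup D] [InnerProductSpace ℂ D] [CompleteSpace D]
    (U : H →L[ℂ] H) (hU : U ∈ unitary (H →L[ℂ] H))
    (B : D →L[ℂ] H) (hB : ∀ x : D, ‖B x‖ = ‖x‖)
    (Γ : D →L[ℂ] D) (hΓ : ∀ x : D, x ≠ 0 → ‖Γ x‖ < ‖x‖)
    (T : H →L[ℂ] H) (hT : T = U + B ∘L (Γ - 1) ∘L adjoint B ∘L U)
    (z : ℂ) (hz : ‖z‖ < 1)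
    (F₁ : D →L[ℂ] D)
    (hF₁ : F₁ = z • (adjoint B ∘L Ring.inverse (1 - z • adjoint U) ∘L adjoint U ∘L B)) :
    IsUnit (1 - z • adjoint T) ∧
    IsUnit ((1 : D →L[ℂ] D) - (adjoint Γ - 1) ∘L F₁) ∧
    adjoint B ∘L
        (-T + z • (CFC.sqrt (1 - T * star T) ∘L Ring.inverse (1 - z • adjoint T) ∘L
          CFC.sqrt (1 - star T * T))) ∘L adjoint U ∘L B =
      -Γ + CFC.sqrt (1 - Γ * star Γ) ∘L F₁ ∘L
        Ring.inverse ((1 : D →L[ℂ] D) - (adjoint Γ - 1) ∘L F₁) ∘L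
          CFC.sqrt (1 - star Γ * Γ) := by
  have hBB : adjoint B ∘L B = 1 := (norm_map_iff_adjoint_comp_self B).mp hB
  have hUU : U ∘L adjoint U = 1 := Unitary.mul_star_self_of_mem hU
  have hΓ1 : ‖Γ‖ ≤ 1 := norm_le_one_of_norm_apply_lt hΓ
  obtain rfl : T = extendById B Γ ∘L U := hT.trans (extendById_comp U).symm
  have hTstar : adjoint (extendById B Γ ∘L U) =
      adjoint U ∘L (1 + B ∘L (adjoint Γ - 1) ∘L adjoint B) := by
    rw [adjoint_comp, adjoint_extendById]
    rfl
  have hunitT : IsUnit (1 - z • adjoint (extendById B Γ ∘L U)) :=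
    isUnit_one_sub_smul_of_norm_le_one ((adjoint.norm_map _).trans_le
      (norm_extendById_comp_le_one hBB hU hΓ1)) hz
  have hunitU : IsUnit (1 - z • adjoint U) := isUnit_one_sub_smul_of_norm_le_one
    ((adjoint.norm_map _).trans_le (norm_le_one_of_mem_unitary hU)) hz
  obtain ⟨hunitK, hres⟩ := compressed_resolvent_of_perturbation (adjoint U) B (adjoint B)
    (adjoint Γ - 1) z hunitU (hTstar ▸ hunitT) F₁ hF₁
  refine ⟨hunitT, hunitK, ?_⟩
  rw [← hTstar] at hres
  rw [sqrt_one_sub_mul_star_self_extendById_comp hBB hU hΓ1,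
    sqrt_one_sub_star_mul_self_extendById_comp hBB hU hΓ1, ← comp_assoc F₁, ← hres,
    adjoint_comp (adjoint U) B, adjoint_adjoint]
  simp only [comp_add, add_comp, neg_comp, comp_neg, smul_comp, comp_smul, comp_assoc,
    comp_comp_of_comp_eq_one hBB, comp_comp_of_comp_eq_one hUU, hBB, one_def, comp_id,
    adjoint_comp_extendById_comp hBB]
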